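/- Let 0 < α < 1, 1 < β ≤ 2, μ_α ≥ 0 and μ_β < 0, and let m ≥ 2. Then the matrix D = μ_α(A + Aᵀ) + μ_β(B + Bᵀ) is symmetric and positive definite. -/

import Mathlib

/-!
`A + Aᵀ` is the symmetric Toeplitz matrix with symbol `t₀ = 2w₁`, `t₁ = w₀ + w₂`, `t_d = w_{d+1}`.
Its row sums split into two halves `w₁ + t₁ + ⋯ + t_p = w₀ + ⋯ + w_{p+1}`, and since
`∑_{k ≤ n} g_k^{(γ)} = g_n^{(γ-1)}` these partial sums have the sign of `g^{(γ-1)}`.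
For `0 < α < 1` the off-diagonal entries of `A + Aᵀ` are `≤ 0` and its row sums are positive, so it
is positive semidefinite by diagonal dominance. For `1 < β ≤ 2` all signs flip, and `-(B + Bᵀ)` is
even positive definite: its first row sum and its superdiagonal are strict (irreducible diagonal
dominance). Both follow from `xᵀ M x = ∑ᵢ (∑ⱼ M i j) xᵢ² + ∑ᵢⱼ (-M i j) (xᵢ - xⱼ)² / 2`.
-/

/-- Grünwald–Letnikov coefficients: `g γ 0 = 1`, `g γ k = (1 - (γ+1)/k) * g γ (k-1)`. -/
noncomputable def g (γ : ℝ) : ℕ → ℝ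
  | 0 => 1
  | k + 1 => (1 - (γ + 1) / ((k : ℝ) + 1)) * g γ k

/-- WSGD coefficients: `w γ 0 = (γ/2) g γ 0`, `w γ k = (γ/2) g γ k + ((2-γ)/2) g γ (k-1)`. -/
noncomputable def w (γ : ℝ) : ℕ → ℝ
  | 0 => γ / 2 * g γ 0
  | k + 1 => γ / 2 * g γ (k + 1) + (2 - γ) / 2 * g γ k

/-- The `(m-1) × (m-1)` lower-Hessenberg Toeplitz matrix with entries
`w_{i-j+1}^{(γ)}` for `j ≤ i+1` (1-based indices) and `0` otherwise. -/
noncomputable def wsgdMatrix (γ : ℝ) (m : ℕ) : Matrix (Fin (m - 1)) (Fin (m - 1)) ℝ :=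
  fun i j => if (j : ℕ) ≤ (i : ℕ) + 1 then w γ ((i : ℕ) + 1 - (j : ℕ)) else 0

/-- The Crank–Nicolson matrix `D = μ_α (A + Aᵀ) + μ_β (B + Bᵀ)`. -/
noncomputable def matD (α β μα μβ : ℝ) (m : ℕ) : Matrix (Fin (m - 1)) (Fin (m - 1)) ℝ :=
  μα • (wsgdMatrix α m + Matrix.transpose (wsgdMatrix α m)) + μβ • (wsgdMatrix β m + Matrix.transpose (wsgdMatrix β m))

open Finset Matrix

lemma Fin.apply_eq_apply_of_forall_succ {α : Type*} {n : ℕ} {x : Fin n → α}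
    (h : ∀ i j : Fin n, (j : ℕ) = i + 1 → x i = x j) (i j : Fin n) : x i = x j := by
  have hn : 0 < n := i.pos
  suffices key : ∀ k (hk : k < n), x ⟨k, hk⟩ = x ⟨0, hn⟩ from
    (key i i.isLt).trans (key j j.isLt).symm
  intro k
  induction k with
  | zero => intro _; rfl
  | succ k ih => intro hk; rw [← h ⟨k, by omega⟩ ⟨k + 1, hk⟩ rfl, ih]

lemma Fin.dist_eq_succ_of_ne {n : ℕ} {i j : Fin n} (hij : i ≠ j) : ∃ d, Nat.dist i j = d + 1 :=
  Nat.exists_eq_add_one_of_ne_zero fun h => hij (Fin.ext (Nat.eq_of_dist_eq_zero h))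

lemma Fin.sum_univ_dist {M : Type*} [AddCommMonoid M] (t : ℕ → M) {n : ℕ} (i : Fin n) :
    ∑ j : Fin n, t (Nat.dist i j)
      = t 0 + ∑ d ∈ range i, t (d + 1) + ∑ d ∈ range (n - 1 - i), t (d + 1) := by
  rw [Fin.sum_univ_eq_sum_range (fun j => t (Nat.dist i j)), range_eq_Ico,
    ← sum_Ico_consecutive _ (Nat.zero_le i) i.isLt.le, ← range_eq_Ico, sum_Ico_eq_sum_range,
    show n - i = n - 1 - i + 1 by omega, sum_range_succ', ← sum_range_reflect]
  have reflect : ∑ j ∈ range i, t (Nat.dist i (i - 1 - j)) = ∑ d ∈ range i, t (d + 1) :=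
    sum_congr rfl fun j hj => by
      rw [mem_range] at hj
      rw [Nat.dist_comm, Nat.dist_eq_sub_of_le (by omega)]
      congr 1; omega
  simp only [reflect, Nat.dist_eq_sub_of_le (Nat.le_add_right _ _), Nat.add_sub_cancel_left]
  abel

section DiagonalDominance

variable {ι : Type*} {M : Matrix ι ι ℝ}

lemma Matrix.IsSymm.dotProduct_mulVec_self [Fintype ι] (hM : M.IsSymm) (x : ι → ℝ) :
    x ⬝ᵥ M *ᵥ x = ∑ i, (∑ j, M i j) * x i ^ 2 + ∑ i, ∑ j, -M i j * (x i - x j) ^ 2 / 2 := by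
  have swap : ∑ i, ∑ j, M i j * x j ^ 2 = ∑ i, ∑ j, M i j * x i ^ 2 := by
    rw [sum_comm]
    exact sum_congr rfl fun i _ => sum_congr rfl fun j _ => by rw [hM.apply]
  calc x ⬝ᵥ M *ᵥ x
      = ∑ i, ∑ j, ((M i j * x i ^ 2 + M i j * x j ^ 2) / 2 + -M i j * (x i - x j) ^ 2 / 2) := by
        simp only [dotProduct, mulVec, mul_sum]
        exact sum_congr rfl fun i _ => sum_congr rfl fun j _ => by ring
    _ = (∑ i, ∑ j, M i j * x i ^ 2 + ∑ i, ∑ j, M i j * x j ^ 2) / 2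
          + ∑ i, ∑ j, -M i j * (x i - x j) ^ 2 / 2 := by
        simp only [sum_add_distrib, ← sum_div]
    _ = _ := by
        rw [swap]
        simp only [sum_mul]
        ring

lemma neg_mul_sq_sub_div_two_nonneg (hoff : ∀ i j, i ≠ j → M i j ≤ 0) (x : ι → ℝ) (i j : ι) :
    0 ≤ -M i j * (x i - x j) ^ 2 / 2 := by
  rcases eq_or_ne i j with rfl | hij
  · simp
  · have := hoff i j hij
    have := sq_nonneg (x i - x j)
    nlinarith

lemma Matrix.posSemidef_of_offDiag_nonpos_of_sum_row_nonneg [Fintype ι] (hM : M.IsSymm)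
    (hoff : ∀ i j, i ≠ j → M i j ≤ 0) (hrow : ∀ i, 0 ≤ ∑ j, M i j) : M.PosSemidef := by
  refine posSemidef_iff_dotProduct_mulVec.mpr ⟨isHermitian_iff_isSymm.mpr hM, fun x => ?_⟩
  rw [star_trivial, hM.dotProduct_mulVec_self]
  exact add_nonneg (sum_nonneg fun i _ => mul_nonneg (hrow i) (sq_nonneg _))
    (sum_nonneg fun i _ => sum_nonneg fun j _ => neg_mul_sq_sub_div_two_nonneg hoff x i j)

end DiagonalDominance

lemma Matrix.posDef_of_offDiag_nonpos_of_sum_row_nonneg {n : ℕ} {M : Matrix (Fin n) (Fin n) ℝ}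
    (hM : M.IsSymm) (hoff : ∀ i j, i ≠ j → M i j ≤ 0) (hrow : ∀ i, 0 ≤ ∑ j, M i j)
    (i₀ : Fin n) (hi₀ : 0 < ∑ j, M i₀ j) (hadj : ∀ i j : Fin n, (j : ℕ) = i + 1 → M i j < 0) :
    M.PosDef := by
  refine posDef_iff_dotProduct_mulVec.mpr ⟨isHermitian_iff_isSymm.mpr hM, fun x hx => ?_⟩
  rw [star_trivial, hM.dotProduct_mulVec_self]
  have hdiag : ∀ i ∈ univ, 0 ≤ (∑ j, M i j) * x i ^ 2 :=
    fun i _ => mul_nonneg (hrow i) (sq_nonneg _)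
  have hoffdiag : ∀ i ∈ univ, 0 ≤ ∑ j, -M i j * (x i - x j) ^ 2 / 2 :=
    fun i _ => sum_nonneg fun j _ => neg_mul_sq_sub_div_two_nonneg hoff x i j
  by_cases hxi₀ : x i₀ = 0
  · obtain ⟨i, j, hij, hne⟩ : ∃ i j : Fin n, (j : ℕ) = i + 1 ∧ x i ≠ x j := by
      by_contra! hconst
      exact hx (funext fun i => (Fin.apply_eq_apply_of_forall_succ hconst i i₀).trans hxi₀)
    have hpos : 0 < -M i j * (x i - x j) ^ 2 / 2 := by
      have := hadj i j hij
      have := sq_pos_of_ne_zero (sub_ne_zero.mpr hne)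
      nlinarith
    have := (single_le_sum (fun j _ => neg_mul_sq_sub_div_two_nonneg hoff x i j) (mem_univ j)).trans
      (single_le_sum hoffdiag (mem_univ i))
    linarith [sum_nonneg hdiag]
  · have hpos : 0 < (∑ j, M i₀ j) * x i₀ ^ 2 := mul_pos hi₀ (by positivity)
    linarith [single_le_sum hdiag (mem_univ i₀), sum_nonneg hoffdiag]

section Coefficients

variable (γ : ℝ)

lemma g_zero : g γ 0 = 1 := rfl

lemma g_succ (k : ℕ) : g γ (k + 1) = (1 - (γ + 1) / ((k : ℝ) + 1)) * g γ k := rfl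

lemma w_succ (k : ℕ) : w γ (k + 1) = γ / 2 * g γ (k + 1) + (2 - γ) / 2 * g γ k := rfl

lemma g_one : g γ 1 = -γ := by
  rw [g_succ, g_zero]; ring

lemma g_two : g γ 2 = γ * (γ - 1) / 2 := by
  rw [g_succ, g_one]; ring

lemma w_zero : w γ 0 = γ / 2 := by
  simp [w, g_zero]

lemma w_one : w γ 1 = (1 - γ) * (2 + γ) / 2 := by
  rw [w_succ, g_one, g_zero]; ring

lemma w_zero_add_w_two : w γ 0 + w γ 2 = γ * (γ - 1) * (γ + 2) / 4 := by
  rw [w_zero, w_succ, g_two, g_one]; ring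

lemma g_succ_eq_neg_mul_g_sub_one (n : ℕ) :
    g γ (n + 1) = -(γ / ((n : ℝ) + 1)) * g (γ - 1) n := by
  induction n with
  | zero => simp [g_one, g_zero]
  | succ n ih =>
    rw [g_succ, ih, g_succ (γ - 1)]
    push_cast
    field_simp
    ring

lemma sum_range_g (n : ℕ) : ∑ k ∈ range (n + 1), g γ k = g (γ - 1) n := by
  induction n with
  | zero => simp [g_zero]
  | succ n ih =>
    rw [sum_range_succ, ih, g_succ_eq_neg_mul_g_sub_one, g_succ (γ - 1)]
    ring

lemma sum_range_w (n : ℕ) :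
    ∑ k ∈ range (n + 2), w γ k = γ / 2 * g (γ - 1) (n + 1) + (2 - γ) / 2 * g (γ - 1) n := by
  simp only [sum_range_succ' (w γ), w_succ, sum_add_distrib, ← mul_sum, w_zero]
  rw [← sum_range_g, ← sum_range_g, sum_range_succ' (g γ) (n + 1), g_zero]
  ring

end Coefficients

section Signs

variable {γ : ℝ}

lemma g_nonneg (hγ : γ ≤ 0) (k : ℕ) : 0 ≤ g γ k := by
  induction k with
  | zero => simp [g_zero]
  | succ k ih =>
    rw [g_succ]
    refine mul_nonneg ?_ ih
    rw [sub_nonneg, div_le_one (by positivity)]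
    linarith [(k.cast_nonneg : (0 : ℝ) ≤ k)]

lemma g_pos (hγ : γ < 0) (k : ℕ) : 0 < g γ k := by
  induction k with
  | zero => simp [g_zero]
  | succ k ih =>
    rw [g_succ]
    refine mul_pos ?_ ih
    rw [sub_pos, div_lt_one (by positivity)]
    linarith [(k.cast_nonneg : (0 : ℝ) ≤ k)]

lemma g_succ_neg (h0 : 0 < γ) (h1 : γ < 1) (k : ℕ) : g γ (k + 1) < 0 := by
  rw [g_succ_eq_neg_mul_g_sub_one, neg_mul, neg_lt_zero]
  exact mul_pos (by positivity) (g_pos (by linarith) k)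

lemma g_succ_nonpos (h0 : 0 ≤ γ) (h1 : γ ≤ 1) (k : ℕ) : g γ (k + 1) ≤ 0 := by
  rw [g_succ_eq_neg_mul_g_sub_one, neg_mul, neg_nonpos]
  exact mul_nonneg (by positivity) (g_nonneg (by linarith) k)

lemma g_add_two_nonneg (h1 : 1 ≤ γ) (h2 : γ ≤ 2) (k : ℕ) : 0 ≤ g γ (k + 2) := by
  rw [g_succ_eq_neg_mul_g_sub_one, neg_mul, neg_nonneg]
  exact mul_nonpos_of_nonneg_of_nonpos (by positivity)
    (g_succ_nonpos (by linarith) (by linarith) k)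

lemma w_add_two_neg (h0 : 0 < γ) (h1 : γ < 1) (k : ℕ) : w γ (k + 2) < 0 := by
  rw [w_succ]
  nlinarith [g_succ_neg h0 h1 (k + 1), g_succ_neg h0 h1 k]

lemma w_add_three_nonneg (h1 : 1 ≤ γ) (h2 : γ ≤ 2) (k : ℕ) : 0 ≤ w γ (k + 3) := by
  rw [w_succ]
  nlinarith [g_add_two_nonneg h1 h2 (k + 1), g_add_two_nonneg h1 h2 k]

lemma sum_range_w_pos (h0 : 0 < γ) (h1 : γ < 1) (n : ℕ) : 0 < ∑ k ∈ range (n + 2), w γ k := by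
  rw [sum_range_w]
  nlinarith [g_pos (by linarith : γ - 1 < 0) (n + 1), g_pos (by linarith : γ - 1 < 0) n]

lemma sum_range_w_nonpos (h1 : 1 ≤ γ) (h2 : γ ≤ 2) (n : ℕ) :
    ∑ k ∈ range (n + 3), w γ k ≤ 0 := by
  rw [sum_range_w]
  nlinarith [g_succ_nonpos (by linarith : 0 ≤ γ - 1) (by linarith) (n + 1),
    g_succ_nonpos (by linarith : 0 ≤ γ - 1) (by linarith) n]

end Signs

noncomputable def wsgdSymmCoeff (γ : ℝ) : ℕ → ℝ
  | 0 => 2 * w γ 1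
  | 1 => w γ 0 + w γ 2
  | d + 2 => w γ (d + 3)

lemma wsgdMatrix_add_transpose_apply (γ : ℝ) (m : ℕ) (i j : Fin (m - 1)) :
    (wsgdMatrix γ m + (wsgdMatrix γ m)ᵀ) i j = wsgdSymmCoeff γ (Nat.dist i j) := by
  suffices key : ∀ a b : ℕ, a ≤ b →
      (if b ≤ a + 1 then w γ (a + 1 - b) else 0) + (if a ≤ b + 1 then w γ (b + 1 - a) else 0)
        = wsgdSymmCoeff γ (Nat.dist a b) by
    simp only [Matrix.add_apply, transpose_apply, wsgdMatrix]
    rcases le_total (i : ℕ) j with h | h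
    · exact key _ _ h
    · rw [add_comm, Nat.dist_comm]; exact key _ _ h
  intro a b hab
  obtain ⟨d, rfl⟩ := Nat.exists_eq_add_of_le hab
  rw [Nat.dist_eq_sub_of_le hab, Nat.add_sub_cancel_left]
  rcases d with _ | _ | d
  · rw [if_pos (by omega), if_pos (by omega), show a + 1 - (a + 0) = 1 by omega,
      show a + 0 + 1 - a = 1 by omega]
    exact (two_mul _).symm
  · rw [if_pos (by omega), if_pos (by omega), show a + 1 - (a + (0 + 1)) = 0 by omega,
      show a + (0 + 1) + 1 - a = 2 by omega]
    rfl
  · rw [if_neg (by omega), if_pos (by omega), show a + (d + 2) + 1 - a = d + 3 by omega]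
    simp [wsgdSymmCoeff]

lemma w_one_add_sum_wsgdSymmCoeff (γ : ℝ) (p : ℕ) :
    w γ 1 + ∑ d ∈ range (p + 1), wsgdSymmCoeff γ (d + 1) = ∑ k ∈ range (p + 3), w γ k := by
  induction p with
  | zero =>
    simp only [zero_add, range_one, sum_singleton, sum_range_succ, wsgdSymmCoeff]
    ring
  | succ p ih =>
    rw [sum_range_succ, ← add_assoc, ih, sum_range_succ _ (p + 3)]
    rfl

section WsgdSymm

variable {γ : ℝ}

lemma w_one_pos (h1 : γ < 1) (h2 : -2 < γ) : 0 < w γ 1 := by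
  rw [w_one]; nlinarith

lemma w_one_neg (h1 : 1 < γ) : w γ 1 < 0 := by
  rw [w_one]; nlinarith

lemma wsgdSymmCoeff_one_neg (h0 : 0 < γ) (h1 : γ < 1) : wsgdSymmCoeff γ 1 < 0 := by
  show w γ 0 + w γ 2 < 0
  rw [w_zero_add_w_two]
  have : γ * (γ - 1) < 0 := mul_neg_of_pos_of_neg h0 (by linarith)
  nlinarith

lemma wsgdSymmCoeff_one_pos (h1 : 1 < γ) : 0 < wsgdSymmCoeff γ 1 := by
  show 0 < w γ 0 + w γ 2
  rw [w_zero_add_w_two]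
  have : 0 < γ * (γ - 1) := mul_pos (by linarith) (by linarith)
  nlinarith

lemma wsgdSymmCoeff_succ_nonpos (h0 : 0 < γ) (h1 : γ < 1) : ∀ d, wsgdSymmCoeff γ (d + 1) ≤ 0
  | 0 => (wsgdSymmCoeff_one_neg h0 h1).le
  | d + 1 => (w_add_two_neg h0 h1 (d + 1)).le

lemma wsgdSymmCoeff_succ_nonneg (h1 : 1 < γ) (h2 : γ ≤ 2) : ∀ d, 0 ≤ wsgdSymmCoeff γ (d + 1)
  | 0 => (wsgdSymmCoeff_one_pos h1).le
  | d + 1 => w_add_three_nonneg h1.le h2 d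

lemma w_one_add_sum_wsgdSymmCoeff_pos (h0 : 0 < γ) (h1 : γ < 1) :
    ∀ p, 0 < w γ 1 + ∑ d ∈ range p, wsgdSymmCoeff γ (d + 1)
  | 0 => by simpa using w_one_pos h1 (by linarith)
  | p + 1 => by
    rw [w_one_add_sum_wsgdSymmCoeff]
    exact sum_range_w_pos h0 h1 (p + 1)

lemma w_one_add_sum_wsgdSymmCoeff_nonpos (h1 : 1 < γ) (h2 : γ ≤ 2) :
    ∀ p, w γ 1 + ∑ d ∈ range p, wsgdSymmCoeff γ (d + 1) ≤ 0
  | 0 => by simpa using (w_one_neg h1).le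
  | p + 1 => by
    rw [w_one_add_sum_wsgdSymmCoeff]
    exact sum_range_w_nonpos h1.le h2 p

end WsgdSymm

lemma sum_wsgdMatrix_add_transpose_row (γ : ℝ) (m : ℕ) (i : Fin (m - 1)) :
    ∑ j, (wsgdMatrix γ m + (wsgdMatrix γ m)ᵀ) i j
      = (w γ 1 + ∑ d ∈ range i, wsgdSymmCoeff γ (d + 1))
        + (w γ 1 + ∑ d ∈ range (m - 1 - 1 - i), wsgdSymmCoeff γ (d + 1)) := by
  simp only [wsgdMatrix_add_transpose_apply, Fin.sum_univ_dist]
  rw [show wsgdSymmCoeff γ 0 = 2 * w γ 1 from rfl]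
  ring

lemma posSemidef_wsgdMatrix_add_transpose {α : ℝ} (h0 : 0 < α) (h1 : α < 1) (m : ℕ) :
    (wsgdMatrix α m + (wsgdMatrix α m)ᵀ).PosSemidef := by
  refine posSemidef_of_offDiag_nonpos_of_sum_row_nonneg (isSymm_add_transpose_self _)
    (fun i j hij => ?_) (fun i => ?_)
  · obtain ⟨d, hd⟩ := Fin.dist_eq_succ_of_ne hij
    rw [wsgdMatrix_add_transpose_apply, hd]
    exact wsgdSymmCoeff_succ_nonpos h0 h1 d
  · rw [sum_wsgdMatrix_add_transpose_row]
    linarith [w_one_add_sum_wsgdSymmCoeff_pos h0 h1 i,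
      w_one_add_sum_wsgdSymmCoeff_pos h0 h1 (m - 1 - 1 - i)]

lemma posDef_neg_wsgdMatrix_add_transpose {β : ℝ} (h1 : 1 < β) (h2 : β ≤ 2) {m : ℕ}
    (hm : 2 ≤ m) : (-(wsgdMatrix β m + (wsgdMatrix β m)ᵀ)).PosDef := by
  have hrow : ∀ i, ∑ j, (-(wsgdMatrix β m + (wsgdMatrix β m)ᵀ)) i j
      = -((w β 1 + ∑ d ∈ range i, wsgdSymmCoeff β (d + 1))
        + (w β 1 + ∑ d ∈ range (m - 1 - 1 - i), wsgdSymmCoeff β (d + 1))) := fun i => by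
    simp only [Matrix.neg_apply, sum_neg_distrib, sum_wsgdMatrix_add_transpose_row]
  refine posDef_of_offDiag_nonpos_of_sum_row_nonneg (isSymm_add_transpose_self _).neg
    (fun i j hij => ?_) (fun i => ?_) ⟨0, by omega⟩ ?_ (fun i j hij => ?_)
  · obtain ⟨d, hd⟩ := Fin.dist_eq_succ_of_ne hij
    rw [Matrix.neg_apply, wsgdMatrix_add_transpose_apply, hd, neg_nonpos]
    exact wsgdSymmCoeff_succ_nonneg h1 h2 d
  · rw [hrow]
    linarith [w_one_add_sum_wsgdSymmCoeff_nonpos h1 h2 i,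
      w_one_add_sum_wsgdSymmCoeff_nonpos h1 h2 (m - 1 - 1 - i)]
  · rw [hrow, Fin.val_mk, sum_range_zero, add_zero, Nat.sub_zero]
    linarith [w_one_neg h1, w_one_add_sum_wsgdSymmCoeff_nonpos h1 h2 (m - 1 - 1)]
  · rw [Matrix.neg_apply, wsgdMatrix_add_transpose_apply, neg_neg_iff_pos,
      show Nat.dist i j = 1 by rw [Nat.dist_eq_sub_of_le (by omega)]; omega]
    exact wsgdSymmCoeff_one_pos h1

theorem stmt_17 (α β μα μβ : ℝ) (hα0 : 0 < α) (hα1 : α < 1) (hβ1 : 1 < β) (hβ2 : β ≤ 2)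
    (hμα : 0 ≤ μα) (hμβ : μβ < 0) (m : ℕ) (hm : 2 ≤ m) :
    (matD α β μα μβ m).IsSymm ∧ (matD α β μα μβ m).PosDef := by
  have hD : matD α β μα μβ m = μα • (wsgdMatrix α m + (wsgdMatrix α m)ᵀ)
      + (-μβ) • -(wsgdMatrix β m + (wsgdMatrix β m)ᵀ) := by
    rw [neg_smul_neg]; rfl
  have hpos : (matD α β μα μβ m).PosDef := hD ▸ PosDef.posSemidef_add
    ((posSemidef_wsgdMatrix_add_transpose hα0 hα1 m).smul hμα)
    ((posDef_neg_wsgdMatrix_add_transpose hβ1 hβ2 hm).smul (neg_pos.mpr hμβ))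
  exact ⟨isHermitian_iff_isSymm.mp hpos.isHermitian, hpos⟩
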